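/- arXiv:1211.2071 — 2 statements merged into one kernel-verified Lean document; each statement's English description precedes it below -/
import Mathlib

section
/- Let η ∈ (0, 1/2) be small enough that a_η = √(2 log λ_f(η)) is well defined and positive, and let μ_η be the positive root of μ² + 2 a_η μ = λ_e(η)². For μ ≥ 0 let θ̂_μ(x) = η μ φ(x−μ; 1) / ( (1−η) φ(x; 1) + η φ(x−μ; 1) ) be the posterior-mean (Bayes) estimator for the two-point prior (1−η)δ_0 + ηδ_μ under unit-variance Gaussian noise. Then there exists ε_η with ε_η → 0 as η → 0 such that for all μ ∈ [0, μ_η]: E_{Z ~ N(0,1)} ( θ̂_μ(μ + Z) − μ )² ≥ μ² (1 − ε_η). -/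
open MeasureTheory ProbabilityTheory Filter
open scoped ENNReal NNReal

noncomputable section

/-- Real-valued Kullback–Leibler divergence `KL(μ ‖ ν) = ∫ log (dμ/dν) dμ`. -/
def KLdiv {E : Type*} [MeasurableSpace E] (μ ν : Measure E) : ℝ :=
  ∫ x, Real.log ((μ.rnDeriv ν x).toReal) ∂μ

/-- Product Gaussian measure `⊗_{i<n} N(θ i, v)` on `ℝⁿ`. -/
def gaussPi {n : ℕ} (θ : Fin n → ℝ) (v : ℝ≥0) : Measure (Fin n → ℝ) :=
  Measure.pi fun i => gaussianReal (θ i) v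

/-- KL prediction risk in the n-dimensional Gaussian sequence model:
past observation `X ~ N_n(θ, I)`, future `Y ~ N_n(θ, r I)`. -/
def risk {n : ℕ} (r : ℝ≥0) (θ : Fin n → ℝ)
    (phat : (Fin n → ℝ) → Measure (Fin n → ℝ)) : ℝ :=
  ∫ x, KLdiv (gaussPi θ r) (phat x) ∂(gaussPi θ 1)

/-- Univariate KL prediction risk: past `X ~ N(θ,1)`, future `Y ~ N(θ,r)`. -/
def risk1 (r : ℝ≥0) (θ : ℝ) (phat : ℝ → Measure ℝ) : ℝ :=
  ∫ x, KLdiv (gaussianReal θ r) (phat x) ∂(gaussianReal θ 1)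

/-- The ℓ₀-sparse parameter set `Θ_n[s]`. -/
def sparseSet (n s : ℕ) : Set (Fin n → ℝ) :=
  {θ | Set.ncard {i | θ i ≠ 0} ≤ s}

/-- Minimax KL risk over all (Markov kernel) predictive density estimators. -/
def minimaxRisk {n : ℕ} (r : ℝ≥0) (Θ : Set (Fin n → ℝ)) : ℝ :=
  ⨅ κ : {κ : Kernel (Fin n → ℝ) (Fin n → ℝ) // IsMarkovKernel κ},
    ⨆ θ : Θ, risk r θ.1 (fun x => κ.1 x)
/-- `λ_e(η) = √(2 log(η⁻¹(1−η)))`. -/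
def lamE (η : ℝ) : ℝ := Real.sqrt (2 * Real.log (η⁻¹ * (1 - η)))

/-- Oracle variance `v_w = r/(1+r)`. -/
def vw (r : ℝ) : ℝ := r / (1 + r)

/-- `λ_f(η) = √v_w · λ_e(η)`. -/
def lamF (r η : ℝ) : ℝ := Real.sqrt (vw r) * lamE η

/-- Bayes KL risk of a prior on `ℝⁿ`: infimum of integrated risk over Markov kernels. -/
def bayesRisk {n : ℕ} (r : ℝ≥0) (π : Measure (Fin n → ℝ)) : ℝ :=
  ⨅ κ : {κ : Kernel (Fin n → ℝ) (Fin n → ℝ) // IsMarkovKernel κ},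
    ∫ θ, risk r θ (fun x => κ.1 x) ∂π

/-- Univariate integrated (Bayes) risk of an estimator w.r.t. a prior. -/
def intRisk1 (r : ℝ≥0) (π : Measure ℝ) (phat : ℝ → Measure ℝ) : ℝ :=
  ∫ θ, risk1 r θ phat ∂π

/-- Univariate Bayes KL risk of a prior. -/
def bayesRisk1 (r : ℝ≥0) (π : Measure ℝ) : ℝ :=
  ⨅ κ : {κ : Kernel ℝ ℝ // IsMarkovKernel κ},
    intRisk1 r π (fun x => κ.1 x)

/-- The sparse prior class `𝔪(η)`. -/
def priorClass (η : ℝ) : Set (Measure ℝ) :=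
  {π | IsProbabilityMeasure π ∧ π {θ : ℝ | θ ≠ 0} ≤ ENNReal.ofReal η}

/-- Univariate sparse minimax predictive risk `β(η, r)`. -/
def betaMinimax (r : ℝ≥0) (η : ℝ) : ℝ :=
  ⨅ κ : {κ : Kernel ℝ ℝ // IsMarkovKernel κ},
    ⨆ π : priorClass η, intRisk1 r π.1 (fun x => κ.1 x)

/-- Two-point sparse prior `(1−η)δ₀ + ηδ_λ`. -/
def twoPointPrior (η lam : ℝ) : Measure ℝ :=
  ENNReal.ofReal (1 - η) • Measure.dirac 0 + ENNReal.ofReal η • Measure.dirac lam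

/-- `a_η = √(2 log λ_f(η))`. -/
def aEta (r η : ℝ) : ℝ := Real.sqrt (2 * Real.log (lamF r η))

/-- `μ_η`: the positive root of `μ² + 2 a_η μ = λ_e(η)²`. -/
def muEta (r η : ℝ) : ℝ := Real.sqrt (aEta r η ^ 2 + lamE η ^ 2) - aEta r η

/-- `ν_η = √v_w · μ_η`. -/
def nuEta (r η : ℝ) : ℝ := Real.sqrt (vw r) * muEta r η

/-- Support points of the cluster prior: `μ_k = (1+2r)^{k-1} ν_η` for `k ≥ 1`. -/
def clusterMu (r η : ℝ) (k : ℕ) : ℝ := (1 + 2 * r) ^ (k - 1) * nuEta r η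

/-- `K = max{k : μ_k ≤ λ_e(η) + a_η}` (as the cardinality of `{1, …, K}`). -/
def clusterK (r η : ℝ) : ℕ :=
  Set.ncard {k : ℕ | 1 ≤ k ∧ clusterMu r η k ≤ lamE η + aEta r η}

/-- The cluster prior `π_CL[η, r]`. -/
def clusterPrior (r η : ℝ) : Measure ℝ :=
  ENNReal.ofReal (1 - η) • Measure.dirac 0 +
    ENNReal.ofReal (η / (2 * clusterK r η)) •
      ∑ k ∈ Finset.Icc 1 (clusterK r η),
        (Measure.dirac (clusterMu r η k) + Measure.dirac (-(clusterMu r η k)))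

/-- Bayes predictive density: the measure on `ℝ` with Lebesgue density
`y ↦ ∫ φ(y−θ; r) φ(x−θ; 1) π(dθ) / ∫ φ(x−θ; 1) π(dθ)`. -/
def bayesPredMeasure (r : ℝ≥0) (π : Measure ℝ) (x : ℝ) : Measure ℝ :=
  MeasureTheory.volume.withDensity fun y => ENNReal.ofReal
    ((∫ θ, gaussianPDFReal θ r y * gaussianPDFReal θ 1 x ∂π) /
      (∫ θ, gaussianPDFReal θ 1 x ∂π))

/-- Univariate threshold predictive density estimator based on the cluster prior:
`p̂_π(·|x)` for `|x| ≤ λ_e(η)` and `N(x, 1+r)` above the threshold. -/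
def pTCL (r : ℝ≥0) (η : ℝ) (x : ℝ) : Measure ℝ :=
  if |x| ≤ lamE η then bayesPredMeasure r (clusterPrior (r : ℝ) η) x
  else gaussianReal x (1 + r)

/-- Posterior-mean (Bayes) estimator for the two-point prior `(1−η)δ₀ + ηδ_μ`
under unit-variance Gaussian noise. -/
def thetaHatTwoPoint (η μ x : ℝ) : ℝ :=
  η * μ * gaussianPDFReal μ 1 x /
    ((1 - η) * gaussianPDFReal 0 1 x + η * gaussianPDFReal μ 1 x)

/-!
With `e = exp (μ x - μ²/2)` the likelihood ratio of `N(μ,1)` to `N(0,1)` at `x`,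
`θ̂_μ(x) - μ = -μ (1-η) / ((1-η) + η e)`: the loss is `μ²` times the squared posterior weight
of `0`. For `0 ≤ μ ≤ μ_η` and `z ≤ a_η - 3/2`, the log-likelihood ratio at `x = μ + z` stays
below the prior log-odds `log ((1-η)/η) = λ_e²/2` by at least `a_η/2`, because `μ_η` solves
`μ² + 2 a_η μ = λ_e²`. There the posterior weight of `0` is at least `1/(1 + exp (-a_η/2))`, so the
risk is at least `μ² Φ(a_η - 3/2) / (1 + exp (-a_η/2))²`, and `a_η → ∞` as `η → 0`.
-/

open Real Set Topology

lemma gaussianPDFReal_one_eq_exp_mul (μ x : ℝ) :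
    gaussianPDFReal μ 1 x = exp (μ * x - μ ^ 2 / 2) * gaussianPDFReal 0 1 x := by
  simp only [gaussianPDFReal, NNReal.coe_one, mul_one, sub_zero]
  rw [mul_left_comm, ← exp_add]
  ring_nf

section TwoPointPrior

variable {η μ x : ℝ}

lemma thetaHatTwoPoint_sub_self (hη0 : 0 ≤ η) (hη1 : η ≤ 1) :
    thetaHatTwoPoint η μ x - μ =
      -(μ * ((1 - η) / ((1 - η) + η * exp (μ * x - μ ^ 2 / 2)))) := by
  have hφ := gaussianPDFReal_pos 0 1 x one_ne_zero
  have hD : 0 < (1 - η) + η * exp (μ * x - μ ^ 2 / 2) := by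
    rcases hη0.eq_or_lt with rfl | hη
    · norm_num
    · nlinarith [exp_pos (μ * x - μ ^ 2 / 2)]
  rw [thetaHatTwoPoint, gaussianPDFReal_one_eq_exp_mul]
  generalize exp (μ * x - μ ^ 2 / 2) = e at hD ⊢
  generalize gaussianPDFReal 0 1 x = φ at hφ ⊢
  rw [show (1 - η) * φ + η * (e * φ) = ((1 - η) + η * e) * φ by ring]
  field_simp
  ring

lemma sq_thetaHatTwoPoint_sub_self_le (hη0 : 0 ≤ η) (hη1 : η ≤ 1) :
    (thetaHatTwoPoint η μ x - μ) ^ 2 ≤ μ ^ 2 := by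
  have hq0 : 0 ≤ (1 - η) / ((1 - η) + η * exp (μ * x - μ ^ 2 / 2)) :=
    div_nonneg (by linarith) (by positivity)
  have hq1 : (1 - η) / ((1 - η) + η * exp (μ * x - μ ^ 2 / 2)) ≤ 1 :=
    div_le_one_of_le₀ (by nlinarith [exp_pos (μ * x - μ ^ 2 / 2)]) (by positivity)
  rw [thetaHatTwoPoint_sub_self hη0 hη1, neg_sq, mul_pow]
  nlinarith [pow_le_one₀ hq0 hq1 (n := 2), sq_nonneg μ]

lemma sq_div_one_add_exp_neg_le_sq_thetaHatTwoPoint_sub_self {t : ℝ} (hη0 : 0 < η) (hη1 : η < 1)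
    (hx : μ * x - μ ^ 2 / 2 + t ≤ log (η⁻¹ * (1 - η))) :
    (μ / (1 + exp (-t))) ^ 2 ≤ (thetaHatTwoPoint η μ x - μ) ^ 2 := by
  have hodds : η * exp (μ * x - μ ^ 2 / 2) ≤ exp (-t) * (1 - η) := by
    have h := exp_le_exp.2 hx
    rw [exp_log (by positivity), exp_add] at h
    rw [exp_neg, inv_mul_eq_div, le_div_iff₀ (exp_pos t)]
    calc η * exp (μ * x - μ ^ 2 / 2) * exp t
        = η * (exp (μ * x - μ ^ 2 / 2) * exp t) := mul_assoc _ _ _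
      _ ≤ η * (η⁻¹ * (1 - η)) := mul_le_mul_of_nonneg_left h hη0.le
      _ = 1 - η := by field_simp
  have hq : 1 / (1 + exp (-t)) ≤ (1 - η) / ((1 - η) + η * exp (μ * x - μ ^ 2 / 2)) := by
    rw [div_le_div_iff₀ (by positivity) (by positivity)]
    nlinarith
  rw [thetaHatTwoPoint_sub_self hη0.le hη1.le, neg_sq, mul_pow]
  calc (μ / (1 + exp (-t))) ^ 2 = μ ^ 2 * (1 / (1 + exp (-t))) ^ 2 := by ring
    _ ≤ _ := by gcongr

lemma integrable_sq_thetaHatTwoPoint_sub_self {ν : Measure ℝ} [IsFiniteMeasure ν]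
    (hη0 : 0 ≤ η) (hη1 : η ≤ 1) :
    Integrable (fun z => (thetaHatTwoPoint η μ (μ + z) - μ) ^ 2) ν := by
  have hmeas : Measurable (thetaHatTwoPoint η μ) := by
    have hφμ := measurable_gaussianPDFReal μ 1
    have hφ0 := measurable_gaussianPDFReal 0 1
    unfold thetaHatTwoPoint
    fun_prop
  refine Integrable.of_bound
    (by fun_prop : Measurable fun z => (thetaHatTwoPoint η μ (μ + z) - μ) ^ 2).aestronglyMeasurable
    (μ ^ 2) (ae_of_all _ fun z => ?_)
  rw [norm_of_nonneg (sq_nonneg _)]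
  exact sq_thetaHatTwoPoint_sub_self_le hη0 hη1

end TwoPointPrior

lemma mul_measureReal_le_integral_of_le {α : Type*} [MeasurableSpace α] {ν : Measure α}
    [IsFiniteMeasure ν] {f : α → ℝ} {s : Set α} {c : ℝ} (hf : 0 ≤ f) (hfi : Integrable f ν)
    (hc : 0 ≤ c) (hs : ∀ x ∈ s, c ≤ f x) : c * ν.real s ≤ ∫ x, f x ∂ν :=
  (mul_le_mul_of_nonneg_left (measureReal_mono hs) hc).trans
    (mul_meas_ge_le_integral_of_nonneg (ae_of_all _ hf) hfi c)

lemma sq_add_two_mul_le_sq_sub {a L M μ z : ℝ} (ha : 0 ≤ a) (hM : 0 ≤ M)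
    (hML : M ^ 2 + 2 * a * M = L ^ 2) (haL : a ≤ L) (hL : 1 ≤ L) (hμ : μ ∈ Icc 0 M)
    (hz : z ≤ a - 3 / 2) : μ ^ 2 + 2 * μ * z ≤ L ^ 2 - a := by
  have ha3M : a ≤ 3 * M := by nlinarith
  have hM0 : 0 < M := by
    rcases hM.eq_or_lt with rfl | h
    · nlinarith
    · exact h
  have haL2 : a ≤ L ^ 2 := by nlinarith
  have hμz : μ * z ≤ μ * (a - 3 / 2) := mul_le_mul_of_nonneg_left hz hμ.1
  -- on `[0, M]` the convex quadratic `μ² + μ (2a - 3)` lies below its chord, ending at `L² - 3M`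
  have hchord : M * (μ ^ 2 + 2 * μ * (a - 3 / 2)) ≤ M * (L ^ 2 - a) := by
    have hL2 : μ * (L ^ 2 - 3 * M) = μ * (M ^ 2 + 2 * a * M - 3 * M) := by rw [← hML]
    nlinarith [mul_nonneg (mul_nonneg hμ.1 (sub_nonneg.2 hμ.2)) hM,
      mul_nonneg (sub_nonneg.2 hμ.2) (sub_nonneg.2 haL2), mul_nonneg hμ.1 (sub_nonneg.2 ha3M)]
  nlinarith [le_of_mul_le_mul_left hchord hM0]

section Parameters

variable {r η : ℝ}

lemma lamE_sq (hη : η ∈ Ioo 0 (1 / 2)) : lamE η ^ 2 = 2 * log (η⁻¹ * (1 - η)) := by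
  have hlog : 0 < log (η⁻¹ * (1 - η)) := by
    apply log_pos
    rw [inv_mul_eq_div, one_lt_div hη.1]
    linarith [hη.2]
  exact sq_sqrt (by positivity)

lemma lamF_le_lamE (hr : 0 ≤ r) : lamF r η ≤ lamE η :=
  mul_le_of_le_one_left (sqrt_nonneg _)
    (sqrt_le_one.2 (div_le_one_of_le₀ (by linarith) (by linarith)))

lemma aEta_nonneg : 0 ≤ aEta r η := sqrt_nonneg _

lemma aEta_le_lamE (hr : 0 ≤ r) (hlf : 1 < lamF r η) : aEta r η ≤ lamE η := by
  have hFE := lamF_le_lamE (η := η) hr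
  refine (sqrt_le_left (by linarith)).2 ?_
  calc 2 * log (lamF r η) = log (lamF r η ^ 2) := by rw [log_pow]; norm_num
    _ ≤ lamF r η ^ 2 - 1 := log_le_sub_one_of_pos (by positivity)
    _ ≤ lamE η ^ 2 := by nlinarith

lemma muEta_nonneg : 0 ≤ muEta r η :=
  sub_nonneg.2 ((le_sqrt aEta_nonneg (by positivity)).2 (le_add_of_nonneg_right (sq_nonneg _)))

lemma muEta_sq_add_two_mul_aEta_mul : muEta r η ^ 2 + 2 * aEta r η * muEta r η = lamE η ^ 2 := by
  have hS := sq_sqrt (add_nonneg (sq_nonneg (aEta r η)) (sq_nonneg (lamE η)))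
  unfold muEta
  nlinarith [hS]

lemma tendsto_lamE_nhdsGT_zero : Tendsto lamE (𝓝[>] 0) atTop := by
  have hodds : Tendsto (fun η : ℝ => η⁻¹ * (1 - η)) (𝓝[>] 0) atTop := by
    refine (tendsto_atTop_add_const_right _ (-1) tendsto_inv_nhdsGT_zero).congr' ?_
    filter_upwards [self_mem_nhdsWithin] with η (hη : 0 < η)
    field_simp
    ring
  exact tendsto_sqrt_atTop.comp ((tendsto_log_atTop.comp hodds).const_mul_atTop two_pos)

lemma tendsto_aEta_nhdsGT_zero (hr : 0 < r) : Tendsto (aEta r) (𝓝[>] 0) atTop := by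
  have hlamF : Tendsto (lamF r) (𝓝[>] 0) atTop :=
    tendsto_lamE_nhdsGT_zero.const_mul_atTop (sqrt_pos.2 (div_pos hr (by linarith)))
  exact tendsto_sqrt_atTop.comp ((tendsto_log_atTop.comp hlamF).const_mul_atTop two_pos)

end Parameters

/-- The relative risk deficit `ε_η`, as a function of `a = a_η`. -/
def riskDeficit (a : ℝ) : ℝ :=
  1 - cdf (gaussianReal 0 1) (a - 3 / 2) / (1 + exp (-(a / 2))) ^ 2

lemma tendsto_riskDeficit_atTop : Tendsto riskDeficit atTop (𝓝 0) := by
  unfold riskDeficit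
  have hcdf := (tendsto_cdf_atTop (gaussianReal 0 1)).comp
    (tendsto_atTop_add_const_right _ (-(3 / 2)) tendsto_id)
  have hexp : Tendsto (fun a : ℝ => exp (-(a / 2))) atTop (𝓝 0) :=
    tendsto_exp_neg_atTop_nhds_zero.comp (tendsto_id.atTop_div_const two_pos)
  have hlim := tendsto_const_nhds (x := (1 : ℝ)).sub
    (hcdf.div ((tendsto_const_nhds (x := (1 : ℝ))).add hexp |>.pow 2) (by norm_num))
  simpa [Function.comp_def, sub_eq_add_neg] using hlim

/-- uniformly over `μ ∈ [0, μ_η]`, the Bayes rule of the two-point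
prior "estimates 0": its quadratic risk at `μ` is at least `μ²(1 − ε_η)` with
`ε_η → 0` as `η → 0⁺`.  (The hypothesis `1 < λ_f(η)` makes `a_η = √(2 log λ_f(η))`
well defined and positive.) -/
theorem two_point_bayes_rule_invisibility (r : ℝ≥0) (hr : 0 < r) :
    ∃ ε : ℝ → ℝ, Tendsto ε (nhdsWithin 0 (Set.Ioi 0)) (nhds 0) ∧
      ∀ η ∈ Set.Ioo (0 : ℝ) (1 / 2), 1 < lamF (r : ℝ) η →
        ∀ μ ∈ Set.Icc (0 : ℝ) (muEta (r : ℝ) η),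
          μ ^ 2 * (1 - ε η) ≤
            ∫ z, (thetaHatTwoPoint η μ (μ + z) - μ) ^ 2 ∂(gaussianReal 0 1) := by
  refine ⟨fun η => riskDeficit (aEta r η),
    tendsto_riskDeficit_atTop.comp (tendsto_aEta_nhdsGT_zero hr), ?_⟩
  rintro η hη hlf μ hμ
  have hη1 : η < 1 := by linarith [hη.2]
  have hlow : ∀ z ∈ Iic (aEta r η - 3 / 2),
      (μ / (1 + exp (-(aEta r η / 2)))) ^ 2 ≤ (thetaHatTwoPoint η μ (μ + z) - μ) ^ 2 := by
    intro z hz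
    have hquad := sq_add_two_mul_le_sq_sub aEta_nonneg muEta_nonneg
      muEta_sq_add_two_mul_aEta_mul (aEta_le_lamE r.coe_nonneg hlf)
      (hlf.le.trans (lamF_le_lamE r.coe_nonneg)) hμ hz
    refine sq_div_one_add_exp_neg_le_sq_thetaHatTwoPoint_sub_self hη.1 hη1 ?_
    rw [show log (η⁻¹ * (1 - η)) = lamE η ^ 2 / 2 by rw [lamE_sq hη]; ring]
    linear_combination hquad / 2
  calc μ ^ 2 * (1 - riskDeficit (aEta r η))
      = (μ / (1 + exp (-(aEta r η / 2)))) ^ 2 *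
          (gaussianReal 0 1).real (Iic (aEta r η - 3 / 2)) := by
        rw [riskDeficit, cdf_eq_real, div_pow]; ring
    _ ≤ _ := mul_measureReal_le_integral_of_le (fun z => sq_nonneg _)
        (integrable_sq_thetaHatTwoPoint_sub_self hη.1.le hη1.le) (sq_nonneg _) hlow
end
end

section
/- Fix r > 0 and η ∈ (0, 1). Let π be any prior probability measure on ℝ with π({0}) ≥ 1 − η, and let p̂_π be its Bayes predictive density. Then the KL risk at the origin satisfies ρ(0, p̂_π) = E_{X ~ N(0,1)} KL( N(0, r) ‖ p̂_π(·|X) ) ≤ log( 1/(1−η) ). -/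
open MeasureTheory ProbabilityTheory Filter
open scoped ENNReal NNReal

noncomputable section

/-!
Since `π {0} ≥ 1 - η`, the numerator of the predictive density at `x` is at least
`(1 - η) φ_r(y) φ_1(x)`, so `p̂_π(·|x) ≥ κ(x) • N(0, r)` with `κ(x) = (1 - η) φ_1(x) / m(x)`,
where `m = gaussMixturePDF π 1` is the marginal density of `X`. Domination by a multiple of
`N(0, r)` gives `KL(N(0, r) ‖ p̂_π(·|x)) ≤ log (m(x) / φ_1(x)) - log (1 - η)`, and averaging over
`X ~ N(0, 1)` the first term contributes `-KL(N(0, 1) ‖ m) ≤ 0` (Gibbs' inequality).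
-/

-- No integrability of `f` is needed: otherwise `∫ f = 0 ≤ ∫ g`.
lemma integral_mono_of_integrable_of_nonneg {α : Type*} [MeasurableSpace α] {μ : Measure α}
    {f g : α → ℝ} (hg : Integrable g μ) (hg0 : 0 ≤ᵐ[μ] g) (hfg : f ≤ᵐ[μ] g) :
    ∫ x, f x ∂μ ≤ ∫ x, g x ∂μ := by
  by_cases hf : Integrable f μ
  · exact integral_mono_ae hf hg hfg
  · rw [integral_undef hf]
    exact integral_nonneg_of_ae hg0

lemma mul_le_integral_of_ofReal_le_measure_singleton {α : Type*} [MeasurableSpace α]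
    [MeasurableSingletonClass α] {μ : Measure α} {a : α} {c : ℝ} {g : α → ℝ} (hc : 0 ≤ c)
    (hμa : ENNReal.ofReal c ≤ μ {a}) (hg0 : 0 ≤ g) (hg : Integrable g μ) :
    c * g a ≤ ∫ x, g x ∂μ := by
  have hle : ENNReal.ofReal c • Measure.dirac a ≤ μ :=
    calc ENNReal.ofReal c • Measure.dirac a ≤ μ {a} • Measure.dirac a := by gcongr
      _ = μ.restrict {a} := (Measure.restrict_singleton μ a).symm
      _ ≤ μ := Measure.restrict_le_self
  calc c * g a = ∫ x, g x ∂(ENNReal.ofReal c • Measure.dirac a) := by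
        rw [integral_smul_measure, integral_dirac, ENNReal.toReal_ofReal hc, smul_eq_mul]
    _ ≤ ∫ x, g x ∂μ := integral_mono_measure hle (ae_of_all _ hg0) hg

lemma KLdiv_le_log_inv_of_smul_le {E : Type*} [MeasurableSpace E] {μ ν : Measure E}
    [IsProbabilityMeasure μ] [SigmaFinite ν] {c : ℝ} (hc0 : 0 < c) (hc1 : c ≤ 1)
    (hle : ENNReal.ofReal c • μ ≤ ν) : KLdiv μ ν ≤ Real.log c⁻¹ := by
  have hac : μ ≪ ν := (Measure.absolutelyContinuous_smul (ENNReal.ofReal_pos.2 hc0).ne').trans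
    (Measure.absolutelyContinuous_of_le hle)
  have hbound : ∀ᵐ y ∂μ, ENNReal.ofReal c * μ.rnDeriv ν y ≤ 1 := by
    refine hac.ae_le ?_
    filter_upwards [Measure.rnDeriv_le_one_of_le hle,
      Measure.rnDeriv_smul_left_of_ne_top μ ν ENNReal.ofReal_ne_top] with y hy hsmul
    rwa [hsmul] at hy
  have hlog_nonneg : 0 ≤ Real.log c⁻¹ := Real.log_nonneg (one_le_inv₀ hc0 |>.2 hc1)
  have hlog : ∀ᵐ y ∂μ, Real.log (μ.rnDeriv ν y).toReal ≤ Real.log c⁻¹ := by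
    filter_upwards [hbound] with y hy
    have hmul : c * (μ.rnDeriv ν y).toReal ≤ 1 := by
      simpa [ENNReal.toReal_mul, hc0.le] using ENNReal.toReal_mono ENNReal.one_ne_top hy
    rcases ENNReal.toReal_nonneg.eq_or_lt with h | h
    · rwa [← h, Real.log_zero]
    · exact Real.log_le_log h (by rwa [← one_div, le_div_iff₀' hc0])
  calc KLdiv μ ν ≤ ∫ _, Real.log c⁻¹ ∂μ :=
        integral_mono_of_integrable_of_nonneg (integrable_const _) (ae_of_all _ fun _ ↦
          hlog_nonneg) hlog
    _ = Real.log c⁻¹ := by simp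

lemma integral_log_nonpos_of_lintegral_le_one {α : Type*} [MeasurableSpace α] {μ : Measure α}
    [IsProbabilityMeasure μ] {g : α → ℝ} (hg : ∀ x, 0 < g x) (hgm : AEStronglyMeasurable g μ)
    (hlint : ∫⁻ x, ENNReal.ofReal (g x) ∂μ ≤ 1)
    (hlog : Integrable (fun x ↦ Real.log (g x)) μ) :
    ∫ x, Real.log (g x) ∂μ ≤ 0 := by
  have hg0 : 0 ≤ᵐ[μ] g := ae_of_all _ fun x ↦ (hg x).le
  have hint : Integrable g μ :=
    ⟨hgm, (hasFiniteIntegral_iff_ofReal hg0).2 (hlint.trans_lt ENNReal.one_lt_top)⟩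
  have hle_one : ∫ x, g x ∂μ ≤ 1 := by
    rw [integral_eq_lintegral_of_nonneg_ae hg0 hgm]
    exact ENNReal.toReal_le_of_le_ofReal zero_le_one (by simpa using hlint)
  calc ∫ x, Real.log (g x) ∂μ ≤ ∫ x, (g x - 1) ∂μ :=
        integral_mono hlog (hint.sub (integrable_const 1)) fun x ↦
          Real.log_le_sub_one_of_pos (hg x)
    _ = ∫ x, g x ∂μ - 1 := by simp [integral_sub hint (integrable_const 1)]
    _ ≤ 0 := by linarith

lemma gaussianPDFReal_le (μ : ℝ) (v : ℝ≥0) (x : ℝ) :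
    gaussianPDFReal μ v x ≤ (√(2 * Real.pi * v))⁻¹ := by
  rw [gaussianPDFReal_def]
  refine mul_le_of_le_one_right (by positivity) (Real.exp_le_one_iff.2 ?_)
  exact div_nonpos_of_nonpos_of_nonneg (neg_nonpos.2 (sq_nonneg _)) (by positivity)

lemma lintegral_ofReal_div_gaussianPDFReal (μ : ℝ) {v : ℝ≥0} (hv : v ≠ 0) (f : ℝ → ℝ) :
    ∫⁻ x, ENNReal.ofReal (f x / gaussianPDFReal μ v x) ∂gaussianReal μ v =
      ∫⁻ x, ENNReal.ofReal (f x) := by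
  rw [gaussianReal_of_var_ne_zero μ hv, lintegral_withDensity_eq_lintegral_mul_non_measurable _
    (measurable_gaussianPDF μ v) (ae_of_all _ fun _ ↦ gaussianPDF_lt_top)]
  refine lintegral_congr fun x ↦ ?_
  rw [Pi.mul_apply, gaussianPDF, ← ENNReal.ofReal_mul (gaussianPDFReal_nonneg μ v x),
    mul_div_cancel₀ _ (gaussianPDFReal_pos μ v x hv).ne']

section GaussMixture

variable (π : Measure ℝ) (v : ℝ≥0)

def gaussMixturePDF (x : ℝ) : ℝ := ∫ θ, gaussianPDFReal θ v x ∂π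

lemma measurable_gaussianPDFReal_mean (x : ℝ) : Measurable fun θ ↦ gaussianPDFReal θ v x :=
  measurable_uncurry_gaussianPDFReal.comp (by fun_prop : Measurable fun θ : ℝ ↦ (θ, v, x))

lemma integrable_gaussianPDFReal_mean [IsFiniteMeasure π] (x : ℝ) :
    Integrable (fun θ ↦ gaussianPDFReal θ v x) π :=
  .of_bound (measurable_gaussianPDFReal_mean v x).aestronglyMeasurable _ (ae_of_all _ fun θ ↦ by
    rw [Real.norm_of_nonneg (gaussianPDFReal_nonneg _ _ _)]
    exact gaussianPDFReal_le θ v x)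

lemma measurable_gaussianPDFReal_swap : Measurable fun p : ℝ × ℝ ↦ gaussianPDFReal p.2 v p.1 :=
  measurable_uncurry_gaussianPDFReal.comp (by fun_prop : Measurable fun p : ℝ × ℝ ↦ (p.2, v, p.1))

lemma measurable_gaussMixturePDF [SFinite π] : Measurable (gaussMixturePDF π v) :=
  (measurable_gaussianPDFReal_swap v).stronglyMeasurable.integral_prod_right'.measurable

lemma gaussMixturePDF_le [IsProbabilityMeasure π] (x : ℝ) :
    gaussMixturePDF π v x ≤ (√(2 * Real.pi * v))⁻¹ :=
  calc gaussMixturePDF π v x ≤ ∫ _, (√(2 * Real.pi * v))⁻¹ ∂π :=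
        integral_mono (integrable_gaussianPDFReal_mean π v x) (integrable_const _)
          fun θ ↦ gaussianPDFReal_le θ v x
    _ = (√(2 * Real.pi * v))⁻¹ := by simp

lemma lintegral_gaussMixturePDF [IsFiniteMeasure π] (hv : v ≠ 0) :
    ∫⁻ x, ENNReal.ofReal (gaussMixturePDF π v x) = π Set.univ := by
  calc ∫⁻ x, ENNReal.ofReal (gaussMixturePDF π v x)
      = ∫⁻ x, ∫⁻ θ, ENNReal.ofReal (gaussianPDFReal θ v x) ∂π := lintegral_congr fun x ↦
        ofReal_integral_eq_lintegral_ofReal (integrable_gaussianPDFReal_mean π v x)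
          (ae_of_all _ fun θ ↦ gaussianPDFReal_nonneg θ v x)
    _ = ∫⁻ θ, (∫⁻ x, ENNReal.ofReal (gaussianPDFReal θ v x)) ∂π :=
        lintegral_lintegral_swap (measurable_gaussianPDFReal_swap v).ennreal_ofReal.aemeasurable
    _ = π Set.univ := by simp [lintegral_gaussianPDFReal_eq_one _ hv]

variable {π v}

lemma mul_gaussianPDFReal_le_gaussMixturePDF [IsFiniteMeasure π] {c : ℝ} (hc : 0 ≤ c)
    (hπ0 : ENNReal.ofReal c ≤ π {0}) (x : ℝ) :
    c * gaussianPDFReal 0 v x ≤ gaussMixturePDF π v x :=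
  mul_le_integral_of_ofReal_le_measure_singleton hc hπ0 (fun θ ↦ gaussianPDFReal_nonneg θ v x)
    (integrable_gaussianPDFReal_mean π v x)

lemma log_gaussMixturePDF_div_le [IsProbabilityMeasure π] (hv : v ≠ 0) {x : ℝ}
    (hx : 0 < gaussMixturePDF π v x) :
    Real.log (gaussMixturePDF π v x / gaussianPDFReal 0 v x) ≤ x ^ 2 / (2 * v) := by
  have hφ := gaussianPDFReal_pos 0 v x hv
  refine (Real.log_le_iff_le_exp (div_pos hx hφ)).2 ?_
  rw [div_le_iff₀ hφ]
  have hφ_eq : Real.exp (x ^ 2 / (2 * v)) * gaussianPDFReal 0 v x = (√(2 * Real.pi * v))⁻¹ := by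
    simp only [gaussianPDFReal_def, sub_zero]
    rw [mul_left_comm, ← Real.exp_add, neg_div, add_neg_cancel, Real.exp_zero, mul_one]
  exact hφ_eq ▸ gaussMixturePDF_le π v x

lemma gaussMixturePDF_pos [IsFiniteMeasure π] [NeZero π] (hv : v ≠ 0) (x : ℝ) :
    0 < gaussMixturePDF π v x := by
  refine (integral_pos_iff_support_of_nonneg (fun θ ↦ gaussianPDFReal_nonneg θ v x)
    (integrable_gaussianPDFReal_mean π v x)).2 ?_
  have hsupp : Function.support (fun θ ↦ gaussianPDFReal θ v x) = Set.univ :=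
    Set.eq_univ_of_forall fun θ ↦ (gaussianPDFReal_pos θ v x hv).ne'
  rw [hsupp]
  exact Measure.measure_univ_pos.2 (NeZero.ne π)

lemma log_le_log_gaussMixturePDF_div [IsFiniteMeasure π] (hv : v ≠ 0) {c : ℝ} (hc : 0 < c)
    (hπ0 : ENNReal.ofReal c ≤ π {0}) (x : ℝ) :
    Real.log c ≤ Real.log (gaussMixturePDF π v x / gaussianPDFReal 0 v x) :=
  Real.log_le_log hc <| (le_div_iff₀ (gaussianPDFReal_pos 0 v x hv)).2 <|
    mul_gaussianPDFReal_le_gaussMixturePDF hc.le hπ0 x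

lemma integrable_log_gaussMixturePDF_div [IsProbabilityMeasure π] (hv : v ≠ 0) {c : ℝ}
    (hc : 0 < c) (hπ0 : ENNReal.ofReal c ≤ π {0}) (μ₀ : ℝ) (w : ℝ≥0) :
    Integrable (fun x ↦ Real.log (gaussMixturePDF π v x / gaussianPDFReal 0 v x))
      (gaussianReal μ₀ w) := by
  have hsq : Integrable (fun x : ℝ ↦ x ^ 2) (gaussianReal μ₀ w) :=
    (memLp_id_gaussianReal 2).integrable_sq
  refine ((integrable_const |Real.log c|).add (hsq.div_const (2 * v))).mono'
    ((measurable_gaussMixturePDF π v).div (measurable_gaussianPDFReal 0 v)).log.aestronglyMeasurable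
    (ae_of_all _ fun x ↦ ?_)
  have hlow := log_le_log_gaussMixturePDF_div hv hc hπ0 x
  have hup := log_gaussMixturePDF_div_le hv (gaussMixturePDF_pos (π := π) hv x)
  have hsq_nonneg : 0 ≤ x ^ 2 / (2 * v) := by positivity
  rw [Real.norm_eq_abs, abs_le, Pi.add_apply]
  constructor <;> linarith [neg_abs_le (Real.log c), le_abs_self (Real.log c)]

lemma integral_log_gaussMixturePDF_div_nonpos [IsProbabilityMeasure π] (hv : v ≠ 0)
    (hint : Integrable (fun x ↦ Real.log (gaussMixturePDF π v x / gaussianPDFReal 0 v x))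
      (gaussianReal 0 v)) :
    ∫ x, Real.log (gaussMixturePDF π v x / gaussianPDFReal 0 v x) ∂gaussianReal 0 v ≤ 0 := by
  refine integral_log_nonpos_of_lintegral_le_one
    (fun x ↦ div_pos (gaussMixturePDF_pos (π := π) hv x) (gaussianPDFReal_pos 0 v x hv))
    ((measurable_gaussMixturePDF π v).div (measurable_gaussianPDFReal 0 v)).aestronglyMeasurable
    ?_ hint
  rw [lintegral_ofReal_div_gaussianPDFReal 0 hv, lintegral_gaussMixturePDF π v hv, measure_univ]

end GaussMixture

lemma smul_gaussianReal_le_bayesPredMeasure {r : ℝ≥0} (hr : r ≠ 0) {π : Measure ℝ}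
    [IsFiniteMeasure π] {c : ℝ} (hc : 0 ≤ c) (hπ0 : ENNReal.ofReal c ≤ π {0}) (x : ℝ) :
    ENNReal.ofReal (c * gaussianPDFReal 0 1 x / gaussMixturePDF π 1 x) • gaussianReal 0 r ≤
      bayesPredMeasure r π x := by
  have hm : 0 ≤ gaussMixturePDF π 1 x := integral_nonneg fun θ ↦ gaussianPDFReal_nonneg θ 1 x
  rw [gaussianReal_of_var_ne_zero 0 hr, bayesPredMeasure,
    ← withDensity_smul' _ _ ENNReal.ofReal_ne_top]
  refine withDensity_mono (ae_of_all _ fun y ↦ ?_)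
  rw [Pi.smul_apply, smul_eq_mul, gaussianPDF, ← ENNReal.ofReal_mul
    (div_nonneg (mul_nonneg hc (gaussianPDFReal_nonneg 0 1 x)) hm)]
  refine ENNReal.ofReal_le_ofReal ?_
  rw [div_mul_eq_mul_div, mul_assoc, mul_comm (gaussianPDFReal 0 1 x)]
  refine div_le_div_of_nonneg_right ?_ hm
  refine mul_le_integral_of_ofReal_le_measure_singleton hc hπ0
    (fun θ ↦ mul_nonneg (gaussianPDFReal_nonneg θ r y) (gaussianPDFReal_nonneg θ 1 x)) ?_
  refine (integrable_gaussianPDFReal_mean π 1 x).bdd_mul (c := (√(2 * Real.pi * r))⁻¹)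
    (measurable_gaussianPDFReal_mean r y).aestronglyMeasurable (ae_of_all _ fun θ ↦ ?_)
  rw [Real.norm_of_nonneg (gaussianPDFReal_nonneg θ r y)]
  exact gaussianPDFReal_le θ r y

lemma KLdiv_gaussianReal_bayesPredMeasure_le {r : ℝ≥0} (hr : r ≠ 0) {π : Measure ℝ}
    [IsFiniteMeasure π] {c : ℝ} (hc : 0 < c) (hπ0 : ENNReal.ofReal c ≤ π {0}) (x : ℝ) :
    KLdiv (gaussianReal 0 r) (bayesPredMeasure r π x) ≤
      Real.log (gaussMixturePDF π 1 x / gaussianPDFReal 0 1 x) - Real.log c := by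
  have hφ : 0 < gaussianPDFReal 0 1 x := gaussianPDFReal_pos 0 1 x one_ne_zero
  have hcφ : c * gaussianPDFReal 0 1 x ≤ gaussMixturePDF π 1 x :=
    mul_gaussianPDFReal_le_gaussMixturePDF hc.le hπ0 x
  have hm : 0 < gaussMixturePDF π 1 x := (mul_pos hc hφ).trans_le hcφ
  have : SigmaFinite (bayesPredMeasure r π x) := SigmaFinite.withDensity_ofReal _
  calc KLdiv (gaussianReal 0 r) (bayesPredMeasure r π x)
      ≤ Real.log (c * gaussianPDFReal 0 1 x / gaussMixturePDF π 1 x)⁻¹ :=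
        KLdiv_le_log_inv_of_smul_le (div_pos (mul_pos hc hφ) hm) ((div_le_one hm).2 hcφ)
          (smul_gaussianReal_le_bayesPredMeasure hr hc.le hπ0 x)
    _ = Real.log (gaussMixturePDF π 1 x / gaussianPDFReal 0 1 x) - Real.log c := by
        rw [inv_div, Real.log_div hm.ne' (mul_pos hc hφ).ne', Real.log_mul hc.ne' hφ.ne',
          Real.log_div hm.ne' hφ.ne']
        ring

/-- for any prior `π` with `π({0}) ≥ 1 − η`, the KL risk at the
origin of the Bayes predictive density satisfies `ρ(0, p̂_π) ≤ log(1/(1−η))`. -/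
theorem bayes_predictive_density_risk_at_zero
    (r : ℝ≥0) (hr : 0 < r) (η : ℝ) (hη : η ∈ Set.Ioo (0 : ℝ) 1)
    (π : Measure ℝ) (hπ : IsProbabilityMeasure π)
    (h0 : ENNReal.ofReal (1 - η) ≤ π {0}) :
    risk1 r 0 (bayesPredMeasure r π) ≤ Real.log (1 / (1 - η)) := by
  have hc : 0 < 1 - η := sub_pos.2 hη.2
  set L := fun x ↦ Real.log (gaussMixturePDF π 1 x / gaussianPDFReal 0 1 x)
  have hL : Integrable L (gaussianReal 0 1) :=
    integrable_log_gaussMixturePDF_div one_ne_zero hc h0 0 1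
  calc risk1 r 0 (bayesPredMeasure r π) ≤ ∫ x, (L x - Real.log (1 - η)) ∂gaussianReal 0 1 :=
        integral_mono_of_integrable_of_nonneg (hL.sub (integrable_const _))
          (ae_of_all _ fun x ↦ sub_nonneg.2 (log_le_log_gaussMixturePDF_div one_ne_zero hc h0 x))
          (ae_of_all _ (KLdiv_gaussianReal_bayesPredMeasure_le hr.ne' hc h0))
    _ = ∫ x, L x ∂gaussianReal 0 1 - Real.log (1 - η) := by
        simp [integral_sub hL (integrable_const _)]
    _ ≤ Real.log (1 / (1 - η)) := by
        rw [one_div, Real.log_inv]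
        linarith [integral_log_gaussMixturePDF_div_nonpos one_ne_zero hL]
end
end
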